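/- Let S be a G-graded ring such that for every graded left S-module M and all g, h ∈ G, S_g M_h = (S_g S_{g⁻¹}) M_{gh}, and each S_g S_{g⁻¹} is s-unital. Then S is symmetrically graded, hence nearly epsilon-strongly graded. -/

import Mathlib

/-!
Take `M = S` with its own grading: for `h = 0` the hypothesis gives
`S_g = S_g S_0 ⊆ (S_g S_{-g}) S_g`, which is symmetry. Symmetry makes `S_g S_{-g}` closed
under multiplication, and in an s-unital ring finitely many elements have a common left unit
(if `u e = e` and `v (a - u a) = a - u a`, then `u + v - v u` fixes both `a` and `e`).
A common left unit of the `a_i` in `s = ∑ a_i t_i` with `a_i ∈ S_g S_{-g}`, `t_i ∈ S_g`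
fixes `s`; right units come from `S_{-g} S_g` in the same way.
-/

open Pointwise

section Defs

variable {G : Type} [AddGroup G] [DecidableEq G]
variable {A : Type} [Ring A]
variable {M : Type} [AddCommGroup M] [Module A M]

/-- The additive subgroup of `M` consisting of finite sums of products `a • m`
with `a ∈ S` and `m ∈ N`. -/
def prodSMul (S : AddSubgroup A) (N : AddSubgroup M) : AddSubgroup M where
  __ := S.toAddSubmonoid • N.toAddSubmonoid
  neg_mem' {x} hx := by
    refine AddSubmonoid.smul_induction_on hx (fun a ha m hm => ?_) (fun x y hx hy => ?_)
    · rw [show -(a • m) = (-a) • m by rw [neg_smul]]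
      exact AddSubmonoid.smul_mem_smul (S.neg_mem ha) hm
    · rw [neg_add]
      exact (S.toAddSubmonoid • N.toAddSubmonoid).add_mem hx hy

/-- A (possibly non-unital) ring, here an additive subgroup of `A` closed under
multiplication, is *s-unital* if every element has a left and a right local unit in it. -/
def IsSUnitalSub (I : AddSubgroup A) : Prop :=
  ∀ a ∈ I, ∃ u ∈ I, ∃ v ∈ I, u * a = a ∧ a * v = a

variable (𝒜 : G → AddSubgroup A)

/-- `S` is symmetrically graded if `S_g S_{g⁻¹} S_g = S_g` for all `g`. -/
def IsSymmetricallyGraded : Prop := ∀ g : G, 𝒜 g * 𝒜 (-g) * 𝒜 g = 𝒜 g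

/-- `S` is nearly epsilon-strongly graded if each `S_g` is an s-unital
`(S_g S_{g⁻¹}, S_{g⁻¹} S_g)`-bimodule: for every `s ∈ S_g` there are
`u ∈ S_g S_{g⁻¹}` and `v ∈ S_{g⁻¹} S_g` with `u s = s = s v`. -/
def IsNearlyEpsilonStrong : Prop :=
  ∀ g : G, ∀ s ∈ 𝒜 g, ∃ u ∈ 𝒜 g * 𝒜 (-g), ∃ v ∈ 𝒜 (-g) * 𝒜 g, u * s = s ∧ s * v = s

end Defs

section Products

variable {A : Type} [Ring A]

theorem prodSMul_eq_mul (S T : AddSubgroup A) : prodSMul S T = S * T := rfl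

protected theorem AddSubgroup.mul_assoc (S T U : AddSubgroup A) : S * T * U = S * (T * U) :=
  AddSubgroup.toAddSubmonoid_injective (mul_assoc S.1 T.1 U.1)

end Products

namespace IsSUnitalSub

variable {A : Type} [Ring A] {I : AddSubgroup A}

theorem exists_left_unit_pair (hsu : IsSUnitalSub I) (hI : I * I ≤ I) {a e : A} (ha : a ∈ I)
    (he : e ∈ I) : ∃ w ∈ I, w * a = a ∧ w * e = e := by
  obtain ⟨u, hu, -, -, hue, -⟩ := hsu e he
  have hmul {x y : A} (hx : x ∈ I) (hy : y ∈ I) : x * y ∈ I :=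
    hI (AddSubmonoid.mul_mem_mul hx hy)
  obtain ⟨v, hv, -, -, hva, -⟩ := hsu (a - u * a) (I.sub_mem ha (hmul hu ha))
  refine ⟨u + v - v * u, I.sub_mem (I.add_mem hu hv) (hmul hv hu), ?_, ?_⟩
  · calc (u + v - v * u) * a = u * a + v * (a - u * a) := by noncomm_ring
      _ = a := by rw [hva]; abel
  · rw [sub_mul, add_mul, mul_assoc, hue]
    abel

theorem exists_right_unit_pair (hsu : IsSUnitalSub I) (hI : I * I ≤ I) {a e : A} (ha : a ∈ I)
    (he : e ∈ I) : ∃ w ∈ I, a * w = a ∧ e * w = e := by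
  obtain ⟨-, -, u, hu, -, heu⟩ := hsu e he
  have hmul {x y : A} (hx : x ∈ I) (hy : y ∈ I) : x * y ∈ I :=
    hI (AddSubmonoid.mul_mem_mul hx hy)
  obtain ⟨-, -, v, hv, -, hav⟩ := hsu (a - a * u) (I.sub_mem ha (hmul ha hu))
  refine ⟨u + v - u * v, I.sub_mem (I.add_mem hu hv) (hmul hu hv), ?_, ?_⟩
  · calc a * (u + v - u * v) = a * u + (a - a * u) * v := by noncomm_ring
      _ = a := by rw [hav]; abel
  · rw [mul_sub, mul_add, ← mul_assoc, heu]
    abel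

/-- Inducting on `x ∈ I * N` with the stronger claim that `x` shares a left unit with any given
element of `I` lets the units of the summands be merged. -/
theorem exists_left_unit_of_mem_mul (hsu : IsSUnitalSub I) (hI : I * I ≤ I) {N : AddSubgroup A}
    {x : A} (hx : x ∈ I * N) : ∃ u ∈ I, u * x = x := by
  suffices h : ∀ e ∈ I, ∃ u ∈ I, u * x = x ∧ u * e = e by
    obtain ⟨u, hu, hux, -⟩ := h 0 I.zero_mem
    exact ⟨u, hu, hux⟩
  refine AddSubmonoid.mul_induction_on hx (fun a ha n _ e he => ?_) (fun x y hx hy e he => ?_)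
  · obtain ⟨u, hu, hua, hue⟩ := hsu.exists_left_unit_pair hI ha he
    exact ⟨u, hu, by rw [← mul_assoc, hua], hue⟩
  · obtain ⟨u, hu, hux, hue⟩ := hx e he
    obtain ⟨v, hv, hvy, hvu⟩ := hy u hu
    refine ⟨v, hv, ?_, by rw [← hue, ← mul_assoc, hvu]⟩
    rw [mul_add, hvy, ← hux, ← mul_assoc, hvu]

theorem exists_right_unit_of_mem_mul (hsu : IsSUnitalSub I) (hI : I * I ≤ I) {N : AddSubgroup A}
    {x : A} (hx : x ∈ N * I) : ∃ v ∈ I, x * v = x := by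
  suffices h : ∀ e ∈ I, ∃ v ∈ I, x * v = x ∧ e * v = e by
    obtain ⟨v, hv, hxv, -⟩ := h 0 I.zero_mem
    exact ⟨v, hv, hxv⟩
  refine AddSubmonoid.mul_induction_on hx (fun n _ a ha e he => ?_) (fun x y hx hy e he => ?_)
  · obtain ⟨v, hv, hav, hev⟩ := hsu.exists_right_unit_pair hI ha he
    exact ⟨v, hv, by rw [mul_assoc, hav], hev⟩
  · obtain ⟨u, hu, hxu, heu⟩ := hx e he
    obtain ⟨v, hv, hyv, huv⟩ := hy u hu
    refine ⟨v, hv, ?_, by rw [← heu, mul_assoc, huv]⟩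
    rw [add_mul, hyv, ← hxu, mul_assoc, huv]

end IsSUnitalSub

section Graded

variable {G : Type} [AddGroup G] {A : Type} [Ring A] (𝒜 : G → AddSubgroup A)

theorem mul_le_graded [SetLike.GradedMul 𝒜] (g h : G) : 𝒜 g * 𝒜 h ≤ 𝒜 (g + h) :=
  AddSubmonoid.mul_le.2 fun a ha b hb => (SetLike.mul_mem_graded ha hb : a * b ∈ 𝒜 (g + h))

theorem isSymmetricallyGraded_of_le [SetLike.GradedMul 𝒜]
    (h : ∀ g, 𝒜 g ≤ 𝒜 g * 𝒜 (-g) * 𝒜 g) : IsSymmetricallyGraded 𝒜 := by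
  refine fun g => le_antisymm ?_ (h g)
  calc 𝒜 g * 𝒜 (-g) * 𝒜 g ≤ 𝒜 (g + -g) * 𝒜 g :=
        AddSubmonoid.mul_le_mul_left (mul_le_graded 𝒜 g (-g))
    _ ≤ 𝒜 (g + -g + g) := mul_le_graded 𝒜 _ g
    _ = 𝒜 g := by rw [neg_add_cancel_right]

variable {𝒜}

theorem IsSymmetricallyGraded.isNearlyEpsilonStrong (hsym : IsSymmetricallyGraded 𝒜)
    (hsu : ∀ g, IsSUnitalSub (𝒜 g * 𝒜 (-g))) : IsNearlyEpsilonStrong 𝒜 := by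
  have hclosed (g : G) : 𝒜 g * 𝒜 (-g) * (𝒜 g * 𝒜 (-g)) ≤ 𝒜 g * 𝒜 (-g) := by
    rw [← AddSubgroup.mul_assoc, hsym g]
  intro g s hs
  have hs_left : s ∈ 𝒜 g * 𝒜 (-g) * 𝒜 g := by rwa [hsym g]
  have hs_right : s ∈ 𝒜 g * (𝒜 (-g) * 𝒜 g) := by rwa [← AddSubgroup.mul_assoc, hsym g]
  obtain ⟨u, hu, hus⟩ := (hsu g).exists_left_unit_of_mem_mul (hclosed g) hs_left
  obtain ⟨v, hv, hsv⟩ :=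
    (hsu (-g)).exists_right_unit_of_mem_mul (hclosed (-g)) (N := 𝒜 g)
      (by rwa [neg_neg])
  exact ⟨u, hu, v, by rwa [neg_neg] at hv, hus, hsv⟩

end Graded

theorem isNearlyEpsilonStrong_of_smul_component_eq
    {G : Type} [AddGroup G] [DecidableEq G]
    {A : Type} [Ring A] (𝒜 : G → AddSubgroup A) [GradedRing 𝒜]
    (hmod : ∀ (M : Type) [AddCommGroup M] [Module A M]
      (ℳ : G → AddSubgroup M) [SetLike.GradedSMul 𝒜 ℳ] [DirectSum.Decomposition ℳ],
      ∀ g h : G, prodSMul (𝒜 g) (ℳ h) = prodSMul (𝒜 g * 𝒜 (-g)) (ℳ (g + h)))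
    (hsu : ∀ g : G, IsSUnitalSub (𝒜 g * 𝒜 (-g))) :
    IsSymmetricallyGraded 𝒜 ∧ IsNearlyEpsilonStrong 𝒜 := by
  have hsym : IsSymmetricallyGraded 𝒜 := isSymmetricallyGraded_of_le 𝒜 fun g s hs => by
    have h := hmod A 𝒜 g 0
    rw [prodSMul_eq_mul, prodSMul_eq_mul, add_zero] at h
    rw [← h, ← mul_one s]
    exact AddSubmonoid.mul_mem_mul hs (SetLike.one_mem_graded 𝒜)
  exact ⟨hsym, hsym.isNearlyEpsilonStrong hsu⟩
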